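/- arXiv:1908.11728 — 3 statements merged into one kernel-verified Lean document; each statement's English description precedes it below -/
import Mathlib

section
/- Let a, b, c > 0 and let Ĝ(a,b,c) be the 2×2 real symmetric matrix with entries Ĝ₁₁ = b², Ĝ₂₂ = a², Ĝ₁₂ = Ĝ₂₁ = −(a² + b² − c²)/2. Then Ĝ(a,b,c) is positive definite if and only if a, b, c satisfy the three strict triangle inequalities a + b − c > 0, a − b + c > 0, and −a + b + c > 0. -/
open Matrix

/-- The discrete first fundamental form of a triangle with edge lengths `a, b, c`. -/
noncomputable def Ghat (a b c : ℝ) : Matrix (Fin 2) (Fin 2) ℝ :=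
  !![b ^ 2, -(a ^ 2 + b ^ 2 - c ^ 2) / 2;
     -(a ^ 2 + b ^ 2 - c ^ 2) / 2, a ^ 2]

/-!
By Sylvester's criterion `Ĝ` is positive definite iff `b² > 0` and `det Ĝ > 0`, and Heron's
formula factors `4 det Ĝ = 16 · area²` as `(a + b + c)(a + b - c)(a - b + c)(-a + b + c)`.
The three last factors have positive pairwise sums `2a, 2b, 2c`, so at most one of them is
nonpositive, and their product is positive iff all three are.
-/

lemma star_dotProduct_mulVec_symm_fin_two {R : Type*} [CommRing R] [StarRing R] [TrivialStar R]
    (p q r : R) (x : Fin 2 → R) :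
    star x ⬝ᵥ (!![p, q; q, r] *ᵥ x) = p * x 0 ^ 2 + 2 * q * x 0 * x 1 + r * x 1 ^ 2 := by
  simp only [dotProduct, mulVec, Fin.sum_univ_two, star_trivial, of_apply, cons_val', cons_val_zero,
    cons_val_one, empty_val', cons_val_fin_one]
  ring

theorem posDef_symm_fin_two_iff {K : Type*} [Field K] [LinearOrder K] [IsStrictOrderedRing K]
    [StarRing K] [TrivialStar K] {p q r : K} :
    (!![p, q; q, r]).PosDef ↔ 0 < p ∧ 0 < p * r - q ^ 2 := by
  have hermitian : (!![p, q; q, r]).IsHermitian := by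
    ext i j; fin_cases i <;> fin_cases j <;> simp
  simp only [posDef_iff_dotProduct_mulVec, hermitian, true_and, star_dotProduct_mulVec_symm_fin_two]
  constructor
  · intro h
    have hp : 0 < p := by simpa using h (x := ![1, 0]) (by simp)
    have hpdet : 0 < p * (p * r - q ^ 2) := by
      have := h (x := ![-q, p]) (by simp [hp.ne'])
      simp only [cons_val_zero, cons_val_one] at this
      linear_combination this
    exact ⟨hp, pos_of_mul_pos_right hpdet hp.le⟩
  · rintro ⟨hp, hdet⟩ x hx
    have hsq : p * (p * x 0 ^ 2 + 2 * q * x 0 * x 1 + r * x 1 ^ 2) =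
        (p * x 0 + q * x 1) ^ 2 + (p * r - q ^ 2) * x 1 ^ 2 := by ring
    by_cases hx1 : x 1 = 0
    · have hx0 : x 0 ≠ 0 := fun hx0 => hx (by ext i; fin_cases i <;> assumption)
      simpa [hx1] using mul_pos hp (sq_pos_of_ne_zero hx0)
    · refine pos_of_mul_pos_right (hsq ▸ ?_) hp.le
      positivity

theorem mul_mul_pos_iff_of_add_pos {R : Type*} [CommRing R] [LinearOrder R] [IsStrictOrderedRing R]
    {x y z : R} (hxy : 0 < x + y) (hyz : 0 < y + z) (hxz : 0 < x + z) :
    0 < x * y * z ↔ 0 < x ∧ 0 < y ∧ 0 < z := by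
  refine ⟨fun h => ?_, fun ⟨hx, hy, hz⟩ => by positivity⟩
  refine ⟨?_, ?_, ?_⟩ <;> by_contra! hle
  · nlinarith [mul_nonpos_of_nonpos_of_nonneg hle (by linarith : (0 : R) ≤ y)]
  · nlinarith [mul_nonpos_of_nonneg_of_nonpos (by linarith : (0 : R) ≤ x) hle]
  · nlinarith [mul_pos (by linarith : (0 : R) < x) (by linarith : (0 : R) < y)]

theorem Ghat_posDef_iff_triangle_inequalities
    (a b c : ℝ) (ha : 0 < a) (hb : 0 < b) (hc : 0 < c) :
    (Ghat a b c).PosDef ↔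
      (0 < a + b - c ∧ 0 < a - b + c ∧ 0 < -a + b + c) := by
  have heron : b ^ 2 * a ^ 2 - (-(a ^ 2 + b ^ 2 - c ^ 2) / 2) ^ 2 =
      (a + b + c) * ((a + b - c) * (a - b + c) * (-a + b + c)) / 4 := by ring
  have hperim : 0 < a + b + c := by linarith
  rw [Ghat, posDef_symm_fin_two_iff, heron, ← mul_mul_pos_iff_of_add_pos (by linarith)
    (by linarith) (by linarith)]
  simp [hperim, pow_pos hb 2]
end

section
/- Let a, b, c > 0 satisfy the strict triangle inequalities and let ã, b̃, c̃ be real numbers. With Ĝ(a,b,c) the 2×2 matrix with entries Ĝ₁₁ = b², Ĝ₂₂ = a², Ĝ₁₂ = Ĝ₂₁ = −(a²+b²−c²)/2, and similarly Ĝ(ã,b̃,c̃), the trace of the discrete distortion tensor satisfies trace(Ĝ(a,b,c)⁻¹ · Ĝ(ã,b̃,c̃)) = ( ã²(−a²+b²+c²) + b̃²(a²−b²+c²) + c̃²(a²+b²−c²) ) / (8·A(a,b,c)²), where A(a,b,c)² = (1/16)(a+b+c)(−a+b+c)(a−b+c)(a+b−c) is the squared Heron area. -/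
open Matrix

/-- The squared Heron area of a triangle with edge lengths `a, b, c`. -/
noncomputable def heronAreaSq (a b c : ℝ) : ℝ :=
  (1 / 16) * ((a + b + c) * (-a + b + c) * (a - b + c) * (a + b - c))

/-- For singular `A` both sides are `0`, by the conventions `A⁻¹ = 0` and `x / 0 = 0`. -/
theorem Matrix.trace_inv_mul_eq_div {n K : Type*} [Fintype n] [DecidableEq n] [Field K]
    (A B : Matrix n n K) : (A⁻¹ * B).trace = (A.adjugate * B).trace / A.det := by
  rw [inv_def, Ring.inverse_eq_inv', smul_mul, trace_smul, smul_eq_mul, div_eq_inv_mul]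

theorem det_Ghat (a b c : ℝ) : (Ghat a b c).det = 4 * heronAreaSq a b c := by
  rw [Ghat, det_fin_two_of, heronAreaSq]
  ring

theorem trace_adjugate_Ghat_mul_Ghat (a b c ta tb tc : ℝ) :
    ((Ghat a b c).adjugate * Ghat ta tb tc).trace =
      (ta ^ 2 * (-a ^ 2 + b ^ 2 + c ^ 2) + tb ^ 2 * (a ^ 2 - b ^ 2 + c ^ 2)
        + tc ^ 2 * (a ^ 2 + b ^ 2 - c ^ 2)) / 2 := by
  simp only [Ghat, adjugate_fin_two_of, trace_fin_two, mul_apply, Fin.sum_univ_two, of_apply,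
    cons_val', cons_val_zero, cons_val_one, cons_val_fin_one, empty_val']
  ring

theorem trace_distortion_tensor_general (a b c ta tb tc : ℝ) :
    ((Ghat a b c)⁻¹ * Ghat ta tb tc).trace =
      (ta ^ 2 * (-a ^ 2 + b ^ 2 + c ^ 2) + tb ^ 2 * (a ^ 2 - b ^ 2 + c ^ 2)
        + tc ^ 2 * (a ^ 2 + b ^ 2 - c ^ 2)) / (8 * heronAreaSq a b c) := by
  rw [trace_inv_mul_eq_div, trace_adjugate_Ghat_mul_Ghat, det_Ghat, div_div]
  ring

theorem trace_distortion_tensor (a b c ta tb tc : ℝ)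
    (ha : 0 < a) (hb : 0 < b) (hc : 0 < c)
    (h1 : 0 < a + b - c) (h2 : 0 < a - b + c) (h3 : 0 < -a + b + c) :
    ((Ghat a b c)⁻¹ * Ghat ta tb tc).trace =
      (ta ^ 2 * (-a ^ 2 + b ^ 2 + c ^ 2) + tb ^ 2 * (a ^ 2 - b ^ 2 + c ^ 2)
        + tc ^ 2 * (a ^ 2 + b ^ 2 - c ^ 2)) / (8 * heronAreaSq a b c) :=
  trace_distortion_tensor_general a b c ta tb tc
end

section
/- Let Q : ℝⁿ → ℝᵐ be strictly differentiable at a point z with Q(z) = 0, and suppose the derivative DQ(z) : ℝⁿ → ℝᵐ is surjective. Then the tangent cone at z of the level set M = { x ∈ ℝⁿ | Q(x) = 0 } equals the kernel of DQ(z): tangentConeAt ℝ M z = ker DQ(z). -/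
open Filter Topology Set

/-!
The inclusion of the tangent cone in the kernel holds for any differentiable map: along a
sequence in the level set, difference quotients of `Q` vanish, so they tend both to `0` and to the
derivative. For the reverse inclusion, surjectivity of the derivative lets the implicit function
theorem parametrize the level set near `z` by a map `φ : ker DQ(z) → ℝⁿ` with `φ 0 = z` and
derivative the inclusion of the kernel. Since `φ` maps a whole neighbourhood of `0` into the level
set, every value of its derivative is a tangent vector.
-/

section

variable {𝕜 : Type*} [NontriviallyNormedField 𝕜]
  {E : Type*} [NormedAddCommGroup E] [NormedSpace 𝕜 E]
  {F : Type*} [NormedAddCommGroup F] [NormedSpace 𝕜 F]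

theorem HasFDerivWithinAt.tangentConeAt_subset_ker {f : E → F} {f' : E →L[𝕜] F} {s : Set E}
    {x : E} (hf : HasFDerivWithinAt f f' s x) (hs : EqOn f (fun _ ↦ f x) s) :
    tangentConeAt 𝕜 s x ⊆ f'.ker := fun _ hv ↦
  hf.unique_on ((hasFDerivWithinAt_const (f x) x s).congr hs rfl) hv

theorem HasFDerivAt.tangentConeAt_preimage_singleton_subset_ker {f : E → F} {f' : E →L[𝕜] F}
    {x : E} (hf : HasFDerivAt f f' x) :
    tangentConeAt 𝕜 (f ⁻¹' {f x}) x ⊆ f'.ker :=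
  hf.hasFDerivWithinAt.tangentConeAt_subset_ker fun _ hy ↦ hy

theorem HasFDerivAt.range_subset_tangentConeAt {G : Type*} [NormedAddCommGroup G]
    [NormedSpace 𝕜 G] {φ : G → E} {φ' : G →L[𝕜] E} {y : G} {s : Set E}
    (hφ : HasFDerivAt φ φ' y) (hs : ∀ᶠ z in 𝓝 y, φ z ∈ s) :
    range φ' ⊆ tangentConeAt 𝕜 s (φ y) := by
  rintro _ ⟨v, rfl⟩
  have hcone : tangentConeAt 𝕜 {z | φ z ∈ s} y = univ := tangentConeAt_of_mem_nhds hs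
  have hv : v ∈ tangentConeAt 𝕜 {z | φ z ∈ s} y := hcone ▸ mem_univ v
  exact tangentConeAt_mono (image_preimage_subset φ s)
    (hφ.hasFDerivWithinAt.mapsTo_tangent_cone hv)

theorem HasStrictFDerivAt.ker_subset_tangentConeAt_preimage_singleton [CompleteSpace E]
    [CompleteSpace F] {f : E → F} {f' : E →L[𝕜] F} {a : E} (hf : HasStrictFDerivAt f f' a)
    (hsurj : f'.range = ⊤) (hker : f'.ker.ClosedComplemented) :
    (f'.ker : Set E) ⊆ tangentConeAt 𝕜 (f ⁻¹' {f a}) a := by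
  set φ := hf.implicitFunctionOfComplemented f f' hsurj hker (f a)
  have hφ₀ : φ 0 = a := hf.implicitFunctionOfComplemented_apply_image hsurj hker
  have hφ : HasFDerivAt φ f'.ker.subtypeL 0 :=
    (hf.to_implicitFunctionOfComplemented hsurj hker).hasFDerivAt
  have hlevel : ∀ᶠ y in 𝓝 (0 : f'.ker), φ y ∈ f ⁻¹' {f a} :=
    (continuous_const.prodMk continuous_id).continuousAt.eventually
      (hf.map_implicitFunctionOfComplemented_eq hsurj hker)
  intro v hv
  simpa [hφ₀] using hφ.range_subset_tangentConeAt hlevel ⟨⟨v, hv⟩, rfl⟩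

end

theorem tangent_cone_of_level_set
    (n m : ℕ) (Q : (Fin n → ℝ) → (Fin m → ℝ))
    (z : Fin n → ℝ) (Q' : (Fin n → ℝ) →L[ℝ] (Fin m → ℝ))
    (hQ : HasStrictFDerivAt Q Q' z) (hz : Q z = 0)
    (hsurj : Function.Surjective Q') :
    tangentConeAt ℝ {x : Fin n → ℝ | Q x = 0} z = LinearMap.ker (Q' : (Fin n → ℝ) →ₗ[ℝ] (Fin m → ℝ)) := by
  have hlevel : {x | Q x = 0} = Q ⁻¹' {Q z} := by rw [hz]; rfl
  rw [hlevel]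
  exact subset_antisymm hQ.hasFDerivAt.tangentConeAt_preimage_singleton_subset_ker
    (hQ.ker_subset_tangentConeAt_preimage_singleton (LinearMap.range_eq_top.2 hsurj)
      Q'.ker_closedComplemented_of_finiteDimensional_range)
end
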